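/- Let n ≥ 3 and let λ₁, …, λₙ be real numbers with λ₁ + ⋯ + λₙ = 0. Writing pₖ = σₖ(λ)/C(n,k), equality p₃² + 4p₂³ = 0 holds if and only if at least n − 1 of the numbers λ₁, …, λₙ are equal to one another. -/

import Mathlib

/-!
With `∑ λᵢ = 0`, Newton's identities give `p₂ = -q / (n(n-1))` and
`p₃ = 2s / (n(n-1)(n-2))` for `q = ∑ λᵢ²`, `s = ∑ λᵢ³`, so the condition reads
`n(n-1) s² = (n-2)² q³`.
Write `q = n(n-1) a²` with `a ≥ 0`. Cauchy–Schwarz gives `λᵢ ≥ -(n-1)a`, so the cubic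
`(x + (n-1)a)(x - a)²` is nonnegative at every `λᵢ`; summing yields `s + (n-2)aq ≥ 0`, with
equality iff every `λᵢ ∈ {-(n-1)a, a}`. Two entries equal to `-(n-1)a` would force
`q ≥ 2(n-1)²a² > n(n-1)a²`, so then `n - 1` entries equal `a`. The case `s = (n-2)aq` follows
by applying this to `-λ`, and the converse is a direct computation on `(-(n-1)c, c, …, c)`.
-/

open Finset

/-- The `k`-th elementary symmetric polynomial of `lam 0, …, lam (n-1)`. -/
noncomputable def esymm {n : ℕ} (k : ℕ) (lam : Fin n → ℝ) : ℝ :=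
  ∑ s ∈ (Finset.univ : Finset (Fin n)).powersetCard k, ∏ i ∈ s, lam i

/-- The normalized elementary symmetric function `p k = σ k / C(n,k)`. -/
noncomputable def p {n : ℕ} (k : ℕ) (lam : Fin n → ℝ) : ℝ :=
  esymm k lam / (n.choose k)

section Outlier

variable {ι α : Type*} [Fintype ι] [DecidableEq α] (f : ι → α) (c : α)

lemma card_sub_one_le_card_filter_eq_iff :
    Fintype.card ι - 1 ≤ #{i | f i = c} ↔ #{i | f i ≠ c} ≤ 1 := by
  have := card_filter_add_card_filter_not (s := univ) (p := fun i => f i = c)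
  simp only [card_univ, ← ne_eq] at this
  omega

lemma exists_forall_ne_eq_of_card_sub_one_le [Nonempty ι]
    (h : Fintype.card ι - 1 ≤ #{i | f i = c}) : ∃ i₀, ∀ j ≠ i₀, f j = c := by
  obtain ⟨i₀, hsub⟩ :=
    card_le_one_iff_subset_singleton.mp ((card_sub_one_le_card_filter_eq_iff f c).mp h)
  refine ⟨i₀, fun j hj => ?_⟩
  by_contra hne
  exact hj (mem_singleton.mp (hsub (by simpa using hne)))

end Outlier

section Moments

variable {ι : Type*} [Fintype ι] (f : ι → ℝ)

lemma sum_eq_add_mul_of_forall_ne_eq (i₀ : ι) (c : ℝ) (h : ∀ j ≠ i₀, f j = c) :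
    ∑ i, f i = f i₀ + (Fintype.card ι - 1) * c := by
  classical
  rw [← add_sum_erase _ f (mem_univ i₀), sum_congr rfl fun j hj => h j (ne_of_mem_erase hj),
    sum_const, card_erase_of_mem (mem_univ i₀), card_univ, nsmul_eq_mul,
    Nat.cast_pred (Fintype.card_pos_iff.mpr ⟨i₀⟩)]

lemma card_mul_sq_le_of_sum_eq_zero (hsum : ∑ i, f i = 0) (i : ι) :
    Fintype.card ι * f i ^ 2 ≤ (Fintype.card ι - 1) * ∑ j, f j ^ 2 := by
  classical
  have hrest : ∑ j ∈ univ.erase i, f j = -f i := by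
    linarith [add_sum_erase _ f (mem_univ i)]
  have hrest_sq : ∑ j ∈ univ.erase i, f j ^ 2 = ∑ j, f j ^ 2 - f i ^ 2 := by
    linarith [add_sum_erase _ (fun j => f j ^ 2) (mem_univ i)]
  have hCS := sq_sum_le_card_mul_sum_sq (s := univ.erase i) (f := f)
  rw [hrest, hrest_sq, card_erase_of_mem (mem_univ i), card_univ,
    Nat.cast_pred (Fintype.card_pos_iff.mpr ⟨i⟩)] at hCS
  linarith

lemma sum_mul_sub_sq_eq_of_sum_eq_zero (hsum : ∑ i, f i = 0) (a : ℝ)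
    (hq : ∑ i, f i ^ 2 = Fintype.card ι * (Fintype.card ι - 1) * a ^ 2) :
    ∑ i, (f i + (Fintype.card ι - 1) * a) * (f i - a) ^ 2
      = ∑ i, f i ^ 3 + (Fintype.card ι - 2) * a * ∑ i, f i ^ 2 := by
  have hterm : ∀ i, (f i + (Fintype.card ι - 1) * a) * (f i - a) ^ 2
      = f i ^ 3 + (Fintype.card ι - 3) * a * f i ^ 2 + (3 - 2 * Fintype.card ι) * a ^ 2 * f i
        + (Fintype.card ι - 1) * a ^ 3 :=
    fun i => by ring
  simp only [hterm, sum_add_distrib, ← mul_sum, sum_const, card_univ, nsmul_eq_mul, hsum]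
  linear_combination (-a) * hq

lemma forall_eq_or_eq_of_sum_pow_three_eq (hsum : ∑ i, f i = 0) {a : ℝ}
    (ha : 0 ≤ a) (hq : ∑ i, f i ^ 2 = Fintype.card ι * (Fintype.card ι - 1) * a ^ 2)
    (hs : ∑ i, f i ^ 3 = -((Fintype.card ι - 2) * a * ∑ i, f i ^ 2)) :
    ∀ i, f i = -((Fintype.card ι - 1) * a) ∨ f i = a := by
  have hterm_nonneg : ∀ i, 0 ≤ (f i + (Fintype.card ι - 1) * a) * (f i - a) ^ 2 := by
    intro i
    have hN : (1 : ℝ) ≤ Fintype.card ι := by exact_mod_cast Fintype.card_pos_iff.mpr ⟨i⟩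
    have hsq : f i ^ 2 ≤ ((Fintype.card ι - 1) * a) ^ 2 := by
      have := card_mul_sq_le_of_sum_eq_zero f hsum i
      rw [hq] at this
      nlinarith
    have := (abs_le_of_sq_le_sq' hsq (by positivity)).1
    exact mul_nonneg (by linarith) (sq_nonneg _)
  have hsum_zero : ∑ i, (f i + (Fintype.card ι - 1) * a) * (f i - a) ^ 2 = 0 := by
    rw [sum_mul_sub_sq_eq_of_sum_eq_zero f hsum a hq, hs]
    ring
  intro i
  rcases mul_eq_zero.mp ((sum_eq_zero_iff_of_nonneg fun i _ => hterm_nonneg i).mp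
    hsum_zero i (mem_univ i)) with h | h
  · exact Or.inl (by linarith)
  · exact Or.inr (sub_eq_zero.mp (pow_eq_zero_iff two_ne_zero |>.mp h))

lemma card_sub_one_le_card_filter_eq_of_forall_eq_or_eq (hN : 3 ≤ Fintype.card ι) {a : ℝ}
    (hq : ∑ i, f i ^ 2 = Fintype.card ι * (Fintype.card ι - 1) * a ^ 2)
    (h : ∀ i, f i = -((Fintype.card ι - 1) * a) ∨ f i = a) :
    Fintype.card ι - 1 ≤ #{i | f i = a} := by
  have hN' : (3 : ℝ) ≤ Fintype.card ι := by exact_mod_cast hN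
  rw [card_sub_one_le_card_filter_eq_iff]
  refine card_le_one.mpr fun i hi j hj => ?_
  by_contra hij
  simp only [mem_filter, mem_univ, true_and] at hi hj
  have hfi := (h i).resolve_right hi
  have hfj := (h j).resolve_right hj
  have ha : a ≠ 0 := by rintro rfl; simp_all
  have hpair : f i ^ 2 + f j ^ 2 ≤ ∑ k, f k ^ 2 := by
    classical
    rw [← sum_pair (f := fun k => f k ^ 2) hij]
    exact sum_le_sum_of_subset_of_nonneg (subset_univ _) fun k _ _ => sq_nonneg (f k)
  rw [hfi, hfj, hq] at hpair
  have : 0 < a ^ 2 := by positivity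
  nlinarith

lemma card_sub_one_le_card_filter_eq_of_sum_pow_three_eq (hN : 3 ≤ Fintype.card ι)
    (hsum : ∑ i, f i = 0) {a : ℝ} (ha : 0 ≤ a)
    (hq : ∑ i, f i ^ 2 = Fintype.card ι * (Fintype.card ι - 1) * a ^ 2)
    (hs : ∑ i, f i ^ 3 = -((Fintype.card ι - 2) * a * ∑ i, f i ^ 2)) :
    Fintype.card ι - 1 ≤ #{i | f i = a} :=
  card_sub_one_le_card_filter_eq_of_forall_eq_or_eq f hN hq
    (forall_eq_or_eq_of_sum_pow_three_eq f hsum ha hq hs)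

lemma card_mul_sq_sum_pow_three_eq_of_forall_ne_eq (hsum : ∑ i, f i = 0) (i₀ : ι) (c : ℝ)
    (h : ∀ j ≠ i₀, f j = c) :
    Fintype.card ι * (Fintype.card ι - 1) * (∑ i, f i ^ 3) ^ 2
      = (Fintype.card ι - 2) ^ 2 * (∑ i, f i ^ 2) ^ 3 := by
  have hi₀ : f i₀ = -((Fintype.card ι - 1) * c) := by
    linarith [sum_eq_add_mul_of_forall_ne_eq f i₀ c h]
  rw [sum_eq_add_mul_of_forall_ne_eq (fun i => f i ^ 2) i₀ (c ^ 2) fun j hj => by rw [h j hj],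
    sum_eq_add_mul_of_forall_ne_eq (fun i => f i ^ 3) i₀ (c ^ 3) fun j hj => by rw [h j hj],
    hi₀]
  ring

theorem card_mul_sq_sum_pow_three_eq_iff (hN : 3 ≤ Fintype.card ι) (hsum : ∑ i, f i = 0) :
    Fintype.card ι * (Fintype.card ι - 1) * (∑ i, f i ^ 3) ^ 2
        = (Fintype.card ι - 2) ^ 2 * (∑ i, f i ^ 2) ^ 3 ↔
      ∃ c, Fintype.card ι - 1 ≤ #{i | f i = c} := by
  have hN' : (3 : ℝ) ≤ Fintype.card ι := by exact_mod_cast hN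
  constructor
  · intro h
    have hN1 : (0 : ℝ) < Fintype.card ι - 1 := by linarith
    obtain ⟨a, ha, hq⟩ : ∃ a, 0 ≤ a ∧
        ∑ i, f i ^ 2 = Fintype.card ι * (Fintype.card ι - 1) * a ^ 2 := by
      refine ⟨√((∑ i, f i ^ 2) / (Fintype.card ι * (Fintype.card ι - 1))),
        Real.sqrt_nonneg _, ?_⟩
      rw [Real.sq_sqrt (div_nonneg (sum_nonneg fun i _ => sq_nonneg (f i)) (by positivity))]
      field_simp
    have hs : (∑ i, f i ^ 3 + (Fintype.card ι - 2) * a * ∑ i, f i ^ 2)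
        * (∑ i, f i ^ 3 - (Fintype.card ι - 2) * a * ∑ i, f i ^ 2) = 0 := by
      refine (mul_right_inj' (a := (Fintype.card ι * (Fintype.card ι - 1) : ℝ))
        (by positivity)).mp ?_
      linear_combination h + (Fintype.card ι - 2) ^ 2 * (∑ i, f i ^ 2) ^ 2 * hq
    rcases mul_eq_zero.mp hs with hs | hs
    · exact ⟨a, card_sub_one_le_card_filter_eq_of_sum_pow_three_eq f hN hsum ha hq
        (by linear_combination hs)⟩
    · have hsum' : ∑ i, -f i = 0 := by simp [hsum]
      have hq' : ∑ i, (-f i) ^ 2 = Fintype.card ι * (Fintype.card ι - 1) * a ^ 2 := by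
        simp only [neg_sq, hq]
      have hs' : ∑ i, (-f i) ^ 3 = -((Fintype.card ι - 2) * a * ∑ i, (-f i) ^ 2) := by
        simp only [neg_sq, Odd.neg_pow (by decide : Odd 3), sum_neg_distrib]
        linear_combination -hs
      refine ⟨-a, ?_⟩
      simpa [neg_eq_iff_eq_neg] using
        card_sub_one_le_card_filter_eq_of_sum_pow_three_eq (-f) hN hsum' ha hq' hs'
  · rintro ⟨c, hc⟩
    have : Nonempty ι := Fintype.card_pos_iff.mp (by omega)
    obtain ⟨i₀, hi₀⟩ := exists_forall_ne_eq_of_card_sub_one_le f c hc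
    exact card_mul_sq_sum_pow_three_eq_of_forall_ne_eq f hsum i₀ c hi₀

end Moments

lemma Nat.cast_choose_three (n : ℕ) : (n.choose 3 : ℝ) = n * (n - 1) * (n - 2) / 6 := by
  induction n with
  | zero => simp
  | succ n ih =>
    rw [Nat.choose_succ_succ', Nat.cast_add, ih, Nat.cast_choose_two]
    push_cast
    ring

section ElementarySymmetric

variable {n : ℕ} (lam : Fin n → ℝ)

lemma esymm_zero : esymm 0 lam = 1 := by
  simp [esymm]

lemma esymm_one : esymm 1 lam = ∑ i, lam i := by
  simp [esymm, powersetCard_one]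

lemma mul_esymm_eq_sum (k : ℕ) : k * esymm k lam = (-1) ^ (k + 1) *
    ∑ a ∈ antidiagonal k with a.1 < k, (-1) ^ a.1 * esymm a.1 lam * ∑ i, lam i ^ a.2 := by
  simpa [MvPolynomial.esymm, esymm, MvPolynomial.psum] using
    congrArg (MvPolynomial.eval lam) (MvPolynomial.mul_esymm_eq_sum (Fin n) ℝ k)

lemma two_mul_esymm_two : 2 * esymm 2 lam = (∑ i, lam i) ^ 2 - ∑ i, lam i ^ 2 := by
  have h := mul_esymm_eq_sum lam 2
  rw [sum_filter, Nat.sum_antidiagonal_eq_sum_range_succ_mk] at h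
  simp only [Nat.cast_ofNat, Nat.reduceAdd, Nat.succ_eq_add_one, Order.lt_two_iff, sum_range_succ,
    range_one, sum_singleton, zero_le, ↓reduceIte, pow_zero, esymm_zero, mul_one, tsub_zero,
    one_mul, Std.le_refl, pow_one, esymm_one, neg_mul, Nat.add_one_sub_one, Nat.not_ofNat_le_one,
    add_zero] at h
  linear_combination h

lemma three_mul_esymm_three : 3 * esymm 3 lam
    = ∑ i, lam i ^ 3 - (∑ i, lam i) * ∑ i, lam i ^ 2 + esymm 2 lam * ∑ i, lam i := by
  have h := mul_esymm_eq_sum lam 3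
  rw [sum_filter, Nat.sum_antidiagonal_eq_sum_range_succ_mk] at h
  simp only [Nat.cast_ofNat, Nat.reduceAdd, Nat.succ_eq_add_one, sum_range_succ, range_one,
    sum_singleton, Nat.ofNat_pos, ↓reduceIte, pow_zero, esymm_zero, mul_one, tsub_zero, one_mul,
    Nat.one_lt_ofNat, pow_one, esymm_one, neg_mul, Nat.add_one_sub_one, Nat.lt_add_one, even_two,
    Even.neg_pow, one_pow, Nat.reduceSub, lt_self_iff_false, add_zero] at h
  linear_combination h

variable {lam}

lemma p_two_of_sum_eq_zero (hsum : ∑ i, lam i = 0) :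
    p 2 lam = -(∑ i, lam i ^ 2) / (n * (n - 1)) := by
  have he : esymm 2 lam = -(∑ i, lam i ^ 2) / 2 := by
    linear_combination (two_mul_esymm_two lam) / 2 + (∑ i, lam i) * hsum / 2
  rw [p, he, Nat.cast_choose_two, div_div_div_cancel_right₀ two_ne_zero]

lemma p_three_of_sum_eq_zero (hsum : ∑ i, lam i = 0) :
    p 3 lam = 2 * (∑ i, lam i ^ 3) / (n * (n - 1) * (n - 2)) := by
  have he : esymm 3 lam = 2 * (∑ i, lam i ^ 3) / 6 := by
    linear_combination (three_mul_esymm_three lam + (esymm 2 lam - ∑ i, lam i ^ 2) * hsum) / 3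
  rw [p, he, Nat.cast_choose_three, div_div_div_cancel_right₀ (by norm_num)]

end ElementarySymmetric

theorem p3_sq_add_four_p2_cubed_eq_zero_iff (n : ℕ) (hn : 3 ≤ n) (lam : Fin n → ℝ)
    (hsum : ∑ i, lam i = 0) :
    p 3 lam ^ 2 + 4 * p 2 lam ^ 3 = 0 ↔
      ∃ c : ℝ, n - 1 ≤ (Finset.univ.filter fun i => lam i = c).card := by
  have hn' : (3 : ℝ) ≤ n := by exact_mod_cast hn
  have hn1 : (n : ℝ) - 1 ≠ 0 := by linarith
  have hn2 : (n : ℝ) - 2 ≠ 0 := by linarith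
  have hfactor : p 3 lam ^ 2 + 4 * p 2 lam ^ 3
      = 4 / (n ^ 3 * (n - 1) ^ 3 * (n - 2) ^ 2) *
        (n * (n - 1) * (∑ i, lam i ^ 3) ^ 2 - (n - 2) ^ 2 * (∑ i, lam i ^ 2) ^ 3) := by
    rw [p_two_of_sum_eq_zero hsum, p_three_of_sum_eq_zero hsum]
    field_simp
    ring
  rw [hfactor, mul_eq_zero, or_iff_right (by positivity), sub_eq_zero]
  simpa using card_mul_sq_sum_pow_three_eq_iff lam (by simpa using hn) hsum
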